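/- For the EaED, a word y ∈ {0,?,1}^n with D errors and E erasures relative to codeword c, satisfying 2D + E < d_des(t) ≤ 2t+2, is always decoded to c: at least one of the two filled words y1, y2 is BDD-decoded to c, and if both decodings output codewords, the one at smaller unerased distance to y is c (no tie with a wrong codeword can occur, and a wrong codeword cannot be strictly closer). -/
import Mathlib


open Finset

abbrev Word (n : ℕ) := Fin n → ZMod 2

abbrev TWord (n : ℕ) := Fin n → Option (ZMod 2)

/-- Hamming distance between a ternary word `y` and a binary word `c`,
restricted to the unerased coordinates of `y`. -/
def dU {n : ℕ} (y : TWord n) (c : Word n) : ℕ :=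
  (univ.filter fun i => y i ≠ none ∧ y i ≠ some (c i)).card

/-- Number of erased coordinates of a ternary word. -/
def erasures {n : ℕ} (y : TWord n) : ℕ :=
  (univ.filter fun i => y i = none).card

/-- Fill the erased coordinates of `y` with the corresponding bits of `p`. -/
def fill {n : ℕ} (y : TWord n) (p : Word n) : Word n :=
  fun i => (y i).getD (p i)

lemma key_sum {n : ℕ} (y : TWord n) (c p : Word n) :
    hammingDist (fill y p) c + hammingDist (fill y (fun i => p i + 1)) c
      = 2 * dU y c + erasures y := by
  classical
  unfold hammingDist dU erasures
  rw [Finset.card_filter, Finset.card_filter, Finset.card_filter, Finset.card_filter,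
    Finset.mul_sum, ← Finset.sum_add_distrib, ← Finset.sum_add_distrib]
  apply Finset.sum_congr rfl
  intro i _
  cases h : y i with
  | none =>
      simp only [fill, h, Option.getD_none, ne_eq, not_true_eq_false, false_and,
        if_false, mul_zero, zero_add, if_true]
      generalize p i = a
      generalize c i = b
      revert a b; decide
  | some b =>
      simp only [fill, h, Option.getD_some, ne_eq, Option.some.injEq, reduceCtorEq,
        not_false_eq_true, true_and, if_false, add_zero]
      by_cases hb : b = c i <;> simp [hb]

/-- A word `y` with `D` errors and `E` erasures relative to a codeword `c`,
satisfying `2D + E < d_des(t) ≤ 2t+2`, is always decoded to `c` by the EaED: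
at least one of the two filled words `y1 = fill y p`, `y2 = fill y p̄` is
BDD-decoded to `c`, and every wrong codeword output by the BDD on `y1` or `y2`
is strictly farther from `y` (in unerased distance) than `c`, so the EaED's
final selection is `c`. -/
theorem stmt12 {n t ddes : ℕ} (C : Submodule (ZMod 2) (Word n))
    (hddes : ddes = 2 * t + 1 ∨ ddes = 2 * t + 2)
    (hmin : ∀ c1 ∈ C, ∀ c2 ∈ C, c1 ≠ c2 → ddes ≤ hammingDist c1 c2)
    (BDD : Word n → Option (Word n))
    (hspec : ∀ y : Word n,
      (BDD y).elim (∀ c' ∈ C, t < hammingDist y c')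
        (fun c' => c' ∈ C ∧ hammingDist y c' ≤ t))
    (c : Word n) (hc : c ∈ C)
    (y : TWord n) (D E : ℕ)
    (hD : dU y c = D) (hE : erasures y = E)
    (h : 2 * D + E < ddes)
    (p : Word n) :
    (BDD (fill y p) = some c ∨ BDD (fill y (fun i => p i + 1)) = some c) ∧
    ∀ c' ∈ C, c' ≠ c →
      (BDD (fill y p) = some c' ∨ BDD (fill y (fun i => p i + 1)) = some c') →
        dU y c < dU y c' := by
  classical
  have hsum : hammingDist (fill y p) c + hammingDist (fill y (fun i => p i + 1)) c
      = 2 * D + E := by rw [key_sum, hD, hE]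
  have bddc : ∀ z : Word n, hammingDist z c ≤ t → BDD z = some c := by
    intro z hz
    have hs := hspec z
    cases hb : BDD z with
    | none =>
        rw [hb] at hs
        exact absurd hz (not_le.mpr (hs c hc))
    | some c'' =>
        rw [hb] at hs
        simp only [Option.elim_some] at hs
        have hcc : c'' = c := by
          by_contra hne
          have h1 := hmin c'' hs.1 c hc hne
          have h2 := hammingDist_triangle c'' z c
          rw [hammingDist_comm c'' z] at h2
          omega
        rw [hcc]
  constructor
  · rcases hddes with hd | hd
    · rcases (by omega : hammingDist (fill y p) c ≤ t ∨
        hammingDist (fill y (fun i => p i + 1)) c ≤ t) with h1 | h2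
      · exact Or.inl (bddc _ h1)
      · exact Or.inr (bddc _ h2)
    · rcases (by omega : hammingDist (fill y p) c ≤ t ∨
        hammingDist (fill y (fun i => p i + 1)) c ≤ t) with h1 | h2
      · exact Or.inl (bddc _ h1)
      · exact Or.inr (bddc _ h2)
  · intro c' hc' hne _
    have hsub : (univ.filter fun i => c i ≠ c' i) ⊆
        ((univ.filter fun i => y i ≠ none ∧ y i ≠ some (c i)) ∪
          (univ.filter fun i => y i ≠ none ∧ y i ≠ some (c' i))) ∪
          (univ.filter fun i => y i = none) := by
      intro i hi
      simp only [mem_filter, mem_union, mem_univ, true_and] at *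
      cases hyi : y i with
      | none => tauto
      | some b =>
          simp only [hyi, ne_eq, reduceCtorEq, not_false_eq_true, true_and,
            Option.some.injEq]
          by_cases hb : b = c i
          · exact Or.inl (Or.inr (by rw [hb]; exact hi))
          · exact Or.inl (Or.inl hb)
    have hcard : hammingDist c c' ≤ dU y c + dU y c' + E := by
      have h1 := Finset.card_le_card hsub
      have h2 := Finset.card_union_le
        ((univ.filter fun i => y i ≠ none ∧ y i ≠ some (c i)) ∪
          (univ.filter fun i => y i ≠ none ∧ y i ≠ some (c' i)))
        (univ.filter fun i : Fin n => y i = none)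
      have h3 := Finset.card_union_le
        (univ.filter fun i => y i ≠ none ∧ y i ≠ some (c i))
        (univ.filter fun i => y i ≠ none ∧ y i ≠ some (c' i))
      have : hammingDist c c' = (univ.filter fun i => c i ≠ c' i).card := rfl
      rw [this]
      unfold dU
      rw [← hE]; unfold erasures
      omega
    have hdd := hmin c hc c' hc' (Ne.symm hne)
    omega
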